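/- arXiv:1306.0256 — 2 statements merged into one kernel-verified Lean document; each statement's English description precedes it below -/
import Mathlib

section
/- Let X_1, …, X_n be i.i.d. uniform on S^{p-1} (p ≥ 2) and ρ_ij = ⟨X_i, X_j⟩ for i < j. Then the random variables {ρ_ij : 1 ≤ i < j ≤ n} are pairwise independent and identically distributed; moreover, for each fixed pair (i, j), ρ_ij is independent of the collection {ρ_kl : {k,l} ∩ {i,j} = ∅}. -/
/-!
By rotation invariance the law of `⟪u, X⟫` is the same for every unit vector `u`, since a
reflection maps any unit vector to any other; as `X` lies on the sphere, this common law is the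
law `ν` of `⟪X, Y⟫` for independent `X, Y ∼ μ`. Given `X_a`, the inner products `⟪X_a, X_b⟫` and
`⟪X_a, X_c⟫` are independent with law `ν` whatever the value of `X_a` is, so they are
independent. Inner products with disjoint index sets are functions of disjoint subfamilies of
the independent `X_i`.
-/

open Real MeasureTheory ProbabilityTheory Filter

/-- `μ` is the uniform (rotation-invariant) probability distribution on the unit
sphere `S^{p-1} ⊂ ℝ^p`. -/
def IsUniformOnSphere (p : ℕ) (μ : Measure (EuclideanSpace ℝ (Fin p))) : Prop :=
  IsProbabilityMeasure μ ∧
  μ (Metric.sphere (0 : EuclideanSpace ℝ (Fin p)) 1)ᶜ = 0 ∧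
  ∀ T : EuclideanSpace ℝ (Fin p) ≃ₗᵢ[ℝ] EuclideanSpace ℝ (Fin p), μ.map T = μ

open scoped RealInnerProductSpace

section RotationInvariant

variable {E : Type*} [NormedAddCommGroup E] [InnerProductSpace ℝ E] [MeasurableSpace E]
  [BorelSpace E] {μ : Measure E}

theorem measurable_inner_left (u : E) : Measurable (inner ℝ u) :=
  (innerSL ℝ u).continuous.measurable

theorem map_inner_left_eq_of_norm_eq (hinv : ∀ T : E ≃ₗᵢ[ℝ] E, μ.map T = μ) {u v : E}
    (h : ‖u‖ = ‖v‖) : μ.map (inner ℝ u) = μ.map (inner ℝ v) := by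
  set T := Submodule.reflection (ℝ ∙ (u - v))ᗮ
  have hTu : T u = v := Submodule.reflection_sub h
  conv_rhs => rw [← hinv T]
  rw [Measure.map_map (measurable_inner_left v) T.continuous.measurable]
  congr 1
  funext x
  rw [Function.comp_apply, ← hTu, LinearIsometryEquiv.inner_map_map]

variable [SecondCountableTopology E] [IsProbabilityMeasure μ]

theorem map_inner_left_eq_map_inner_prod (hinv : ∀ T : E ≃ₗᵢ[ℝ] E, μ.map T = μ)
    (hsphere : ∀ᵐ x ∂μ, ‖x‖ = 1) {u : E} (hu : ‖u‖ = 1) :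
    μ.map (inner ℝ u) = (μ.prod μ).map (fun q : E × E => ⟪q.1, q.2⟫) := by
  have hinner : Measurable fun q : E × E => ⟪q.1, q.2⟫ := measurable_fst.inner measurable_snd
  ext A hA
  rw [Measure.map_apply hinner hA, Measure.prod_apply (hinner hA)]
  have hslice : ∀ᵐ x ∂μ, μ (Prod.mk x ⁻¹' ((fun q : E × E => ⟪q.1, q.2⟫) ⁻¹' A))
      = μ.map (inner ℝ u) A := by
    filter_upwards [hsphere] with x hx
    rw [map_inner_left_eq_of_norm_eq hinv (hu.trans hx.symm),
      Measure.map_apply (measurable_inner_left _) hA]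
    rfl
  rw [lintegral_congr_ae hslice, lintegral_const, measure_univ, mul_one]

theorem map_inner_inner_eq_prod (hinv : ∀ T : E ≃ₗᵢ[ℝ] E, μ.map T = μ)
    (hsphere : ∀ᵐ x ∂μ, ‖x‖ = 1) :
    (μ.prod (μ.prod μ)).map (fun q : E × E × E => (⟪q.1, q.2.1⟫, ⟪q.1, q.2.2⟫)) =
      ((μ.prod μ).map (fun q : E × E => ⟪q.1, q.2⟫)).prod
        ((μ.prod μ).map (fun q : E × E => ⟪q.1, q.2⟫)) := by
  refine (Measure.prod_eq fun A B hA hB => ?_).symm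
  have hF : Measurable fun q : E × E × E => (⟪q.1, q.2.1⟫, ⟪q.1, q.2.2⟫) := by fun_prop
  rw [Measure.map_apply hF (hA.prod hB), Measure.prod_apply (hF (hA.prod hB))]
  have hslice : ∀ᵐ y ∂μ, (μ.prod μ) (Prod.mk y ⁻¹'
      ((fun q : E × E × E => (⟪q.1, q.2.1⟫, ⟪q.1, q.2.2⟫)) ⁻¹' A ×ˢ B)) =
        (μ.prod μ).map (fun q : E × E => ⟪q.1, q.2⟫) A *
          (μ.prod μ).map (fun q : E × E => ⟪q.1, q.2⟫) B := by
    filter_upwards [hsphere] with y hy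
    rw [← map_inner_left_eq_map_inner_prod hinv hsphere hy,
      Measure.map_apply (measurable_inner_left _) hA,
      Measure.map_apply (measurable_inner_left _) hB, ← Measure.prod_prod]
    rfl
  rw [lintegral_congr_ae hslice, lintegral_const, measure_univ, mul_one]

end RotationInvariant

section Independence

variable {Ω ι : Type*} [MeasurableSpace Ω] {P : Measure Ω}

theorem ProbabilityTheory.iIndepFun.indepFun_set {β : ι → Type*} [∀ i, MeasurableSpace (β i)]
    {X : ∀ i, Ω → β i} (hX : iIndepFun X P) (hmeas : ∀ i, Measurable (X i)) {S T : Set ι}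
    (hST : Disjoint S T) :
    IndepFun (fun ω (i : S) => X i ω) (fun ω (i : T) => X i ω) P := by
  let m : ι → MeasurableSpace Ω := fun i => MeasurableSpace.comap (X i) inferInstance
  have hsup : ∀ R : Set ι, Measurable[⨆ i ∈ R, m i] (fun ω (i : R) => X i ω) := fun R =>
    @measurable_pi_lambda _ _ _ (⨆ i ∈ R, m i) _ _ fun i => Measurable.of_comap_le (le_biSup m i.2)
  rw [IndepFun_iff_Indep]
  exact indep_of_indep_of_le_right
    (indep_of_indep_of_le_left (indep_iSup_of_disjoint (fun i => (hmeas i).comap_le) hX hST)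
      (hsup S).comap_le) (hsup T).comap_le

variable {E : Type*} [NormedAddCommGroup E] [InnerProductSpace ℝ E] [MeasurableSpace E]
  [BorelSpace E] [SecondCountableTopology E] {μ : Measure E} {X : ι → Ω → E}

theorem indepFun_inner_inner_of_disjoint (hX : iIndepFun X P) (hmeas : ∀ i, Measurable (X i))
    (i j : ι) :
    IndepFun (fun ω => ⟪X i ω, X j ω⟫)
      (fun ω (q : {q : ι × ι // q.1 ≠ i ∧ q.1 ≠ j ∧ q.2 ≠ i ∧ q.2 ≠ j}) =>
        ⟪X q.1.1 ω, X q.1.2 ω⟫) P := by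
  have hST : Disjoint ({i, j} : Set ι) {k | k ≠ i ∧ k ≠ j} := by
    rw [Set.disjoint_left]
    rintro k (rfl | rfl) <;> simp
  refine (hX.indepFun_set hmeas hST).comp (φ := fun v => ⟪v ⟨i, by simp⟩, v ⟨j, by simp⟩⟫)
    (ψ := fun w (q : {q : ι × ι // q.1 ≠ i ∧ q.1 ≠ j ∧ q.2 ≠ i ∧ q.2 ≠ j}) =>
      ⟪w ⟨q.1.1, q.2.1, q.2.2.1⟩, w ⟨q.1.2, q.2.2.2⟩⟫) ?_ ?_
  · fun_prop
  · exact measurable_pi_lambda _ fun q => by fun_prop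

variable [IsProbabilityMeasure P]

theorem ProbabilityTheory.iIndepFun.map_prodMk_eq_prod {β : Type*} [MeasurableSpace β]
    {μ : Measure β} {X : ι → Ω → β} (hX : iIndepFun X P) (hmeas : ∀ i, Measurable (X i))
    (hlaw : ∀ i, P.map (X i) = μ) {a b : ι} (hab : a ≠ b) :
    P.map (fun ω => (X a ω, X b ω)) = μ.prod μ := by
  rw [(indepFun_iff_map_prod_eq_prod_map_map (hmeas a).aemeasurable
    (hmeas b).aemeasurable).1 (hX.indepFun hab), hlaw, hlaw]

theorem map_inner_eq_map_inner_prod (hX : iIndepFun X P) (hmeas : ∀ i, Measurable (X i))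
    (hlaw : ∀ i, P.map (X i) = μ) {a b : ι} (hab : a ≠ b) :
    P.map (fun ω => ⟪X a ω, X b ω⟫) = (μ.prod μ).map (fun q : E × E => ⟪q.1, q.2⟫) := by
  rw [← hX.map_prodMk_eq_prod hmeas hlaw hab,
    Measure.map_map (measurable_fst.inner measurable_snd) ((hmeas a).prodMk (hmeas b))]
  rfl

variable [IsProbabilityMeasure μ]

theorem indepFun_inner_inner_of_common (hinv : ∀ T : E ≃ₗᵢ[ℝ] E, μ.map T = μ)
    (hsphere : ∀ᵐ x ∂μ, ‖x‖ = 1) (hX : iIndepFun X P) (hmeas : ∀ i, Measurable (X i))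
    (hlaw : ∀ i, P.map (X i) = μ) {a b c : ι} (hab : a ≠ b) (hac : a ≠ c) (hbc : b ≠ c) :
    IndepFun (fun ω => ⟪X a ω, X b ω⟫) (fun ω => ⟪X a ω, X c ω⟫) P := by
  have htriple : P.map (fun ω => (X a ω, X b ω, X c ω)) = μ.prod (μ.prod μ) := by
    rw [(indepFun_iff_map_prod_eq_prod_map_map (hmeas a).aemeasurable
      ((hmeas b).prodMk (hmeas c)).aemeasurable).1
        (hX.indepFun_prodMk hmeas b c a hab.symm hac.symm).symm, hlaw,
      hX.map_prodMk_eq_prod hmeas hlaw hbc]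
  rw [indepFun_iff_map_prod_eq_prod_map_map ((hmeas a).inner (hmeas b)).aemeasurable
      ((hmeas a).inner (hmeas c)).aemeasurable, map_inner_eq_map_inner_prod hX hmeas hlaw hab,
    map_inner_eq_map_inner_prod hX hmeas hlaw hac, ← map_inner_inner_eq_prod hinv hsphere,
    ← htriple, Measure.map_map (by fun_prop) (by fun_prop)]
  rfl

theorem indepFun_inner_inner_of_lt [LinearOrder ι] (hinv : ∀ T : E ≃ₗᵢ[ℝ] E, μ.map T = μ)
    (hsphere : ∀ᵐ x ∂μ, ‖x‖ = 1) (hX : iIndepFun X P) (hmeas : ∀ i, Measurable (X i))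
    (hlaw : ∀ i, P.map (X i) = μ) {i j k l : ι} (hij : i < j) (hkl : k < l)
    (hne : (i, j) ≠ (k, l)) :
    IndepFun (fun ω => ⟪X i ω, X j ω⟫) (fun ω => ⟪X k ω, X l ω⟫) P := by
  have hcommon : ∀ {a b c : ι}, a ≠ b → a ≠ c → b ≠ c →
      IndepFun (fun ω => ⟪X a ω, X b ω⟫) (fun ω => ⟪X a ω, X c ω⟫) P :=
    indepFun_inner_inner_of_common hinv hsphere hX hmeas hlaw
  have hcomm : ∀ a b : ι, (fun ω => ⟪X a ω, X b ω⟫) = fun ω => ⟪X b ω, X a ω⟫ :=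
    fun a b => funext fun ω => real_inner_comm _ _
  rcases eq_or_ne i k with rfl | hik
  · exact hcommon hij.ne hkl.ne fun hjl => hne (hjl ▸ rfl)
  rcases eq_or_ne i l with rfl | hil
  · rw [hcomm k i]
    exact hcommon hij.ne hkl.ne' (hkl.trans hij).ne'
  rcases eq_or_ne j k with rfl | hjk
  · rw [hcomm i j]
    exact hcommon hij.ne' hkl.ne (hij.trans hkl).ne
  rcases eq_or_ne j l with rfl | hjl
  · rw [hcomm i j, hcomm k j]
    exact hcommon hij.ne' hkl.ne' hik
  exact (indepFun_inner_inner_of_disjoint hX hmeas i j).comp measurable_id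
    (measurable_pi_apply ⟨(k, l), hik.symm, hjk.symm, hil.symm, hjl.symm⟩)

end Independence

theorem rho_pairwise_independent_general (p : ℕ)
    (μ : Measure (EuclideanSpace ℝ (Fin p))) (hμ : IsUniformOnSphere p μ)
    {Ω : Type} [MeasurableSpace Ω] (P : Measure Ω) [IsProbabilityMeasure P]
    (X : ℕ → Ω → EuclideanSpace ℝ (Fin p))
    (hmeas : ∀ i, Measurable (X i))
    (hlaw : ∀ i, Measure.map (X i) P = μ)
    (hindep : iIndepFun X P)
    (ρ : ℕ → ℕ → Ω → ℝ)
    (hρ : ∀ i j ω, ρ i j ω = inner ℝ (X i ω) (X j ω)) :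
    -- pairwise independent
    (∀ i j k l : ℕ, i < j → k < l → (i, j) ≠ (k, l) →
      IndepFun (ρ i j) (ρ k l) P) ∧
    -- identically distributed
    (∀ i j : ℕ, i < j → Measure.map (ρ i j) P = Measure.map (ρ 0 1) P) ∧
    -- each `ρ_ij` is independent of the family of the `ρ_kl` with disjoint indices
    (∀ i j : ℕ, i < j →
      IndepFun (ρ i j)
        (fun ω => fun q : {q : ℕ × ℕ // q.1 < q.2 ∧ q.1 ≠ i ∧ q.1 ≠ j ∧ q.2 ≠ i ∧ q.2 ≠ j} =>
          ρ q.1.1 q.1.2 ω) P) := by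
  obtain ⟨hprob, hsphere, hinv⟩ := hμ
  have hunit : ∀ᵐ x ∂μ, ‖x‖ = 1 := by
    filter_upwards [mem_ae_iff.2 hsphere] with x hx using mem_sphere_zero_iff_norm.1 hx
  obtain rfl : ρ = fun i j ω => ⟪X i ω, X j ω⟫ := by
    funext i j ω
    exact hρ i j ω
  refine ⟨fun i j k l hij hkl hne =>
      indepFun_inner_inner_of_lt hinv hunit hindep hmeas hlaw hij hkl hne,
    fun i j hij => ?_, fun i j _ => ?_⟩
  · rw [map_inner_eq_map_inner_prod hindep hmeas hlaw hij.ne,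
      map_inner_eq_map_inner_prod hindep hmeas hlaw zero_ne_one]
  · let Q := {q : ℕ × ℕ // q.1 ≠ i ∧ q.1 ≠ j ∧ q.2 ≠ i ∧ q.2 ≠ j}
    let Q' := {q : ℕ × ℕ // q.1 < q.2 ∧ q.1 ≠ i ∧ q.1 ≠ j ∧ q.2 ≠ i ∧ q.2 ≠ j}
    exact (indepFun_inner_inner_of_disjoint hindep hmeas i j).comp
      (ψ := fun (v : Q → ℝ) (q : Q') => v ⟨q.1, q.2.2⟩) measurable_id
      (measurable_pi_lambda _ fun q => measurable_pi_apply _)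

/-- Let `X_1, X_2, …` be i.i.d. uniform on `S^{p-1}` (`p ≥ 2`) and
`ρ_ij = ⟨X_i, X_j⟩` for `i < j`. The `ρ_ij` are pairwise independent and
identically distributed; moreover each `ρ_ij` is independent of the collection
`{ρ_kl : {k,l} ∩ {i,j} = ∅}`. -/
theorem rho_pairwise_independent (p : ℕ) (hp : 2 ≤ p)
    (μ : Measure (EuclideanSpace ℝ (Fin p))) (hμ : IsUniformOnSphere p μ)
    {Ω : Type} [MeasurableSpace Ω] (P : Measure Ω) [IsProbabilityMeasure P]
    (X : ℕ → Ω → EuclideanSpace ℝ (Fin p))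
    (hmeas : ∀ i, Measurable (X i))
    (hlaw : ∀ i, Measure.map (X i) P = μ)
    (hindep : iIndepFun X P)
    (ρ : ℕ → ℕ → Ω → ℝ)
    (hρ : ∀ i j ω, ρ i j ω = inner ℝ (X i ω) (X j ω)) :
    -- pairwise independent
    (∀ i j k l : ℕ, i < j → k < l → (i, j) ≠ (k, l) →
      IndepFun (ρ i j) (ρ k l) P) ∧
    -- identically distributed
    (∀ i j : ℕ, i < j → Measure.map (ρ i j) P = Measure.map (ρ 0 1) P) ∧
    -- each `ρ_ij` is independent of the family of the `ρ_kl` with disjoint indices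
    (∀ i j : ℕ, i < j →
      IndepFun (ρ i j)
        (fun ω => fun q : {q : ℕ × ℕ // q.1 < q.2 ∧ q.1 ≠ i ∧ q.1 ≠ j ∧ q.2 ≠ i ∧ q.2 ≠ j} =>
          ρ q.1.1 q.1.2 ω) P) :=
  rho_pairwise_independent_general p μ hμ P X hmeas hlaw hindep ρ hρ
end

section
/- Let ξ_1, …, ξ_n be i.i.d. uniform on [0, 1] with order statistics ξ_{(1)} ≤ ⋯ ≤ ξ_{(n)}, and let W_n = min_{1≤i≤n−1} (ξ_{(i+1)} − ξ_{(i)}) be the smallest spacing. Then n² W_n converges in distribution to the exponential distribution with density e^{−x} on x ≥ 0. -/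
open Real MeasureTheory ProbabilityTheory Filter

/-! Split the points of `[0, a]ⁿ` whose coordinates are pairwise more than `s ≥ 0` apart according
to the order of their coordinates. In the region of a given order, lowering the `k`-th smallest
coordinate by `k s` is a translation onto the same order region of `[0, a - (n - 1) s]ⁿ`. These
regions tile that smaller cube up to the null set where two coordinates coincide, so the whole set
has volume `(a - (n - 1) s)ⁿ`. For i.i.d. uniform points this gives the exact law
`P(W_n ≤ s) = 1 - (1 - (n - 1) s)ⁿ` whenever `(n - 1) s ≤ 1`, and at `s = x / n²` the right-hand
side tends to `1 - e^{-x}`. -/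

open Set Equiv Function

lemma Tuple.eq_sort_of_strictMono_comp {α : Type*} [LinearOrder α] {n : ℕ} {f : Fin n → α}
    {σ : Perm (Fin n)} (h : StrictMono (f ∘ σ)) : σ = Tuple.sort f :=
  Tuple.eq_sort_iff.2 ⟨h.monotone, fun _ _ hij hf => absurd hf (h hij).ne⟩

section GapRegion

variable {n : ℕ}

/-- Points of the cube `[0, a]ⁿ` whose coordinates, listed in the order `σ`, have consecutive
gaps larger than `s`. -/
def gapRegion (s a : ℝ) (σ : Perm (Fin n)) : Set (Fin n → ℝ) :=
  {u | (∀ i, u i ∈ Icc 0 a) ∧ StrictMono fun i : Fin n => u (σ i) - s * i}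

def separated (s : ℝ) : Set (Fin n → ℝ) := {u | Pairwise fun i j => s < |u i - u j|}

variable {s a : ℝ} {σ : Perm (Fin n)} {u : Fin n → ℝ}

lemma measurableSet_gapRegion : MeasurableSet (gapRegion s a σ) := by
  have : gapRegion s a σ = (⋂ i, (· i) ⁻¹' Icc 0 a) ∩
      ⋂ (i : Fin n) (j : Fin n) (_ : i < j), {u | u (σ i) - s * i < u (σ j) - s * j} := by
    ext; simp [gapRegion, StrictMono]
  rw [this]
  exact .inter (.iInter fun i => measurable_pi_apply i measurableSet_Icc)
    (.iInter fun _ => .iInter fun _ => .iInter fun _ =>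
      measurableSet_lt (by fun_prop) (by fun_prop))

lemma measurableSet_separated : MeasurableSet (separated s : Set (Fin n → ℝ)) := by
  have : (separated s : Set (Fin n → ℝ)) =
      ⋂ (i : Fin n) (j : Fin n) (_ : i ≠ j), {u | s < |u i - u j|} := by
    ext; simp [separated, Pairwise]
  rw [this]
  exact .iInter fun _ => .iInter fun _ => .iInter fun _ =>
    measurableSet_lt (by fun_prop) (by fun_prop)

lemma lt_sub_of_mem_gapRegion (hs : 0 ≤ s) (hu : u ∈ gapRegion s a σ) {i j : Fin n}
    (hij : i < j) : s < u (σ j) - u (σ i) := by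
  have hgap := hu.2 hij
  have hji : (1 : ℝ) ≤ ((j : ℕ) : ℝ) - (i : ℕ) := by
    rw [le_sub_iff_add_le']; exact_mod_cast (Fin.lt_def.1 hij : (i : ℕ) + 1 ≤ j)
  nlinarith

lemma lt_abs_sub_of_mem_gapRegion (hs : 0 ≤ s) (hu : u ∈ gapRegion s a σ) {i j : Fin n}
    (hij : i ≠ j) : s < |u (σ i) - u (σ j)| := by
  rcases hij.lt_or_gt with hij | hji
  · exact (lt_sub_of_mem_gapRegion hs hu hij).trans_le (neg_sub (u (σ i)) _ ▸ neg_le_abs _)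
  · exact (lt_sub_of_mem_gapRegion hs hu hji).trans_le (le_abs_self _)

lemma strictMono_comp_of_mem_gapRegion (hs : 0 ≤ s) (hu : u ∈ gapRegion s a σ) :
    StrictMono (u ∘ σ) := fun _ _ hij => by
  have := lt_sub_of_mem_gapRegion hs hu hij
  simp only [comp_apply]
  linarith

lemma pairwise_disjoint_gapRegion (hs : 0 ≤ s) :
    Pairwise (Disjoint on (gapRegion s a : Perm (Fin n) → Set (Fin n → ℝ))) :=
  fun _ _ hστ => disjoint_left.2 fun _ hσ hτ => hστ <|
    (Tuple.eq_sort_of_strictMono_comp (strictMono_comp_of_mem_gapRegion hs hσ)).trans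
      (Tuple.eq_sort_of_strictMono_comp (strictMono_comp_of_mem_gapRegion hs hτ)).symm

lemma separated_inter_pi_Icc (hs : 0 ≤ s) :
    separated s ∩ univ.pi (fun _ => Icc 0 a) = ⋃ σ : Perm (Fin n), gapRegion s a σ := by
  ext u
  simp only [mem_inter_iff, mem_univ_pi, mem_iUnion]
  constructor
  · rintro ⟨hsep, hbox⟩
    have hinj : Injective u := fun i j hij => by_contra fun hne => by
      have : s < |u i - u j| := hsep hne
      rw [hij, sub_self, abs_zero] at this
      linarith
    refine ⟨Tuple.sort u, hbox, ?_⟩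
    have hmono : StrictMono (u ∘ Tuple.sort u) :=
      (Tuple.monotone_sort u).strictMono_of_injective (hinj.comp (Equiv.injective _))
    cases n with
    | zero => exact fun i => i.elim0
    | succ m =>
      refine Fin.strictMono_iff_lt_succ.2 fun i => ?_
      have hgap : s < |_ - _| :=
        hsep ((Tuple.sort u).injective.ne (Fin.castSucc_lt_succ (i := i)).ne)
      have hlt := hmono (Fin.castSucc_lt_succ (i := i))
      simp only [comp_apply] at hlt
      rw [abs_sub_comm, abs_of_pos (sub_pos.2 hlt)] at hgap
      simp only [Fin.val_succ, Fin.val_castSucc, Nat.cast_add, Nat.cast_one]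
      linarith
  · rintro ⟨σ, hu⟩
    refine ⟨fun i j hij => ?_, hu.1⟩
    simpa using lt_abs_sub_of_mem_gapRegion hs hu (σ.symm.injective.ne hij)

lemma gapRegion_eq_preimage_add (hs : 0 ≤ s) :
    gapRegion s a σ =
      (· + fun j => -(s * σ.symm j)) ⁻¹' gapRegion 0 (a - (n - 1) * s) σ := by
  ext u
  have hshift : ∀ i, u (σ i) + -(s * (σ.symm (σ i) : ℕ)) = u (σ i) - s * i := by
    simp [sub_eq_add_neg]
  simp only [gapRegion, mem_preimage, mem_ofPred_eq, Pi.add_apply, zero_mul, sub_zero, hshift]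
  refine and_congr_left fun hw => ?_
  constructor
  · intro hbox j
    obtain ⟨i, rfl⟩ := σ.surjective j
    have hn : 0 < n := i.pos
    have hfirst := hw.monotone (show (⟨0, hn⟩ : Fin n) ≤ i from Nat.zero_le _)
    have hlast := hw.monotone (show i ≤ ⟨n - 1, by omega⟩ from Nat.le_sub_one_of_lt i.isLt)
    have hcast : ((n - 1 : ℕ) : ℝ) = n - 1 := by rw [Nat.cast_sub hn]; simp
    simp only [hcast, CharP.cast_eq_zero, mul_zero, sub_zero] at hfirst hlast
    have h0 := hbox (σ ⟨0, hn⟩)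
    have h1 := hbox (σ ⟨n - 1, by omega⟩)
    rw [mem_Icc] at h0 h1
    rw [hshift, mem_Icc]
    constructor <;> linarith
  · intro hbox j
    obtain ⟨i, rfl⟩ := σ.surjective j
    have hi : ((i : ℕ) : ℝ) ≤ n - 1 := by rw [le_sub_iff_add_le]; exact_mod_cast i.isLt
    have := hbox (σ i)
    rw [hshift, mem_Icc] at this
    rw [mem_Icc]
    constructor <;> nlinarith

lemma volume_gapRegion (hs : 0 ≤ s) :
    volume (gapRegion s a σ) = volume (gapRegion 0 (a - (n - 1) * s) σ) := by
  rw [gapRegion_eq_preimage_add hs, measure_preimage_add_right]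

lemma volume_setOf_apply_eq_apply {i j : Fin n} (hij : i ≠ j) :
    volume {u : Fin n → ℝ | u i = u j} = 0 := by
  have hker : {u : Fin n → ℝ | u i = u j} =
      LinearMap.ker ((LinearMap.proj i : (Fin n → ℝ) →ₗ[ℝ] ℝ) - LinearMap.proj j) := by
    ext u
    simp [sub_eq_zero]
  rw [hker]
  refine Measure.addHaar_submodule _ _ fun htop => ?_
  have hmem := htop ▸ Submodule.mem_top (x := (Pi.single i 1 : Fin n → ℝ))
  simp [Pi.single_eq_of_ne hij.symm] at hmem

lemma volume_compl_separated_zero : volume (separated 0 : Set (Fin n → ℝ))ᶜ = 0 := by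
  refine measure_mono_null (t := ⋃ (i : Fin n) (j : Fin n) (_ : i ≠ j), {u | u i = u j})
    (fun u hu => ?_) (measure_iUnion_null fun i => measure_iUnion_null
      fun j => measure_iUnion_null fun hij => volume_setOf_apply_eq_apply hij)
  simp only [separated, Pairwise, mem_compl_iff, mem_ofPred_eq, not_forall, abs_pos, sub_ne_zero,
    not_not] at hu
  simpa only [mem_iUnion, mem_ofPred_eq] using hu

lemma volume_separated_inter_pi_Icc (hs : 0 ≤ s) :
    volume (separated s ∩ univ.pi fun _ : Fin n => Icc 0 a) =
      ENNReal.ofReal (a - (n - 1) * s) ^ n := by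
  calc volume (separated s ∩ univ.pi fun _ : Fin n => Icc 0 a)
      = ∑' σ, volume (gapRegion s a σ) := by
        rw [separated_inter_pi_Icc hs,
          measure_iUnion (pairwise_disjoint_gapRegion hs) fun _ => measurableSet_gapRegion]
    _ = ∑' σ, volume (gapRegion 0 (a - (n - 1) * s) σ) := tsum_congr fun _ => volume_gapRegion hs
    _ = volume (separated 0 ∩ univ.pi fun _ : Fin n => Icc 0 (a - (n - 1) * s)) := by
        rw [separated_inter_pi_Icc le_rfl,
          measure_iUnion (pairwise_disjoint_gapRegion le_rfl) fun _ => measurableSet_gapRegion]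
    _ = ENNReal.ofReal (a - (n - 1) * s) ^ n := by
        rw [inter_comm, measure_inter_conull volume_compl_separated_zero]
        simp [Real.volume_Icc_pi]

end GapRegion

lemma tendsto_one_sub_mul_div_sq_pow (x : ℝ) :
    Tendsto (fun n : ℕ => (1 - (n - 1) * (x / n ^ 2)) ^ n) atTop (nhds (exp (-x))) := by
  have hlim : Tendsto (fun n : ℕ => (n : ℝ) * -((n - 1) * (x / n ^ 2))) atTop (nhds (-x)) := by
    have := tendsto_const_nhds (x := -x).add (tendsto_const_div_atTop_nhds_zero_nat x)
    rw [add_zero] at this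
    refine this.congr' ?_
    filter_upwards [eventually_ne_atTop 0] with n hn
    field_simp
    ring
  simpa [sub_eq_add_neg] using Real.tendsto_one_add_pow_exp_of_tendsto hlim

lemma lt_sInf_abs_sub_iff {n : ℕ} (hn : 2 ≤ n) (f : ℕ → ℝ) (s : ℝ) :
    s < sInf {r | ∃ i j, i < j ∧ j < n ∧ r = |f i - f j|} ↔
      (fun i : Fin n => f i) ∈ separated s := by
  have hfin : {r | ∃ i j, i < j ∧ j < n ∧ r = |f i - f j|}.Finite := by
    refine ((finite_Iio n).prod (finite_Iio n) |>.image fun p => |f p.1 - f p.2|).subset ?_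
    rintro r ⟨i, j, hij, hjn, rfl⟩
    exact ⟨(i, j), ⟨hij.trans hjn, hjn⟩, rfl⟩
  rw [hfin.lt_csInf_iff ⟨_, 0, 1, one_pos, hn, rfl⟩]
  constructor
  · intro h i j hij
    rcases (Fin.val_injective.ne hij).lt_or_gt with hlt | hlt
    · exact h _ ⟨i, j, hlt, j.isLt, rfl⟩
    · exact abs_sub_comm (f j) (f i) ▸ h _ ⟨j, i, hlt, i.isLt, rfl⟩
  · rintro h _ ⟨i, j, hij, hjn, rfl⟩
    exact h (i := ⟨i, hij.trans hjn⟩) (j := ⟨j, hjn⟩) (Fin.ne_of_val_ne hij.ne)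

lemma sInf_abs_sub_nonneg (n : ℕ) (f : ℕ → ℝ) :
    0 ≤ sInf {r | ∃ i j, i < j ∧ j < n ∧ r = |f i - f j|} :=
  Real.sInf_nonneg fun _ ⟨_, _, _, _, hr⟩ => hr ▸ abs_nonneg _

section IID

variable {Ω : Type*} [MeasurableSpace Ω] {P : Measure Ω} {ξ : ℕ → Ω → ℝ}

lemma map_eq_volume_restrict_pi_Icc (hmeas : ∀ i, Measurable (ξ i))
    (hlaw : ∀ i, P.map (ξ i) = volume.restrict (Icc (0 : ℝ) 1)) (hindep : iIndepFun ξ P)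
    (n : ℕ) :
    P.map (fun ω (i : Fin n) => ξ i ω) =
      volume.restrict (univ.pi fun _ : Fin n => Icc (0 : ℝ) 1) := by
  rw [(hindep.precomp Fin.val_injective).map_fun_eq_pi_map fun i : Fin n => (hmeas i).aemeasurable,
    volume_pi, Measure.restrict_pi_pi]
  simp_rw [hlaw]

lemma measure_separated_of_iid (hmeas : ∀ i, Measurable (ξ i))
    (hlaw : ∀ i, P.map (ξ i) = volume.restrict (Icc (0 : ℝ) 1)) (hindep : iIndepFun ξ P)
    {n : ℕ} {s : ℝ} (hs : 0 ≤ s) :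
    P ((fun ω (i : Fin n) => ξ i ω) ⁻¹' separated s) = ENNReal.ofReal (1 - (n - 1) * s) ^ n := by
  rw [← Measure.map_apply (measurable_pi_lambda _ fun i : Fin n => hmeas i) measurableSet_separated,
    map_eq_volume_restrict_pi_Icc hmeas hlaw hindep, Measure.restrict_apply measurableSet_separated,
    volume_separated_inter_pi_Icc hs]

lemma measureReal_sInf_abs_sub_le [IsProbabilityMeasure P] (hmeas : ∀ i, Measurable (ξ i))
    (hlaw : ∀ i, P.map (ξ i) = volume.restrict (Icc (0 : ℝ) 1)) (hindep : iIndepFun ξ P)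
    {n : ℕ} (hn : 2 ≤ n) {s : ℝ} (hs : 0 ≤ s) (hs1 : (n - 1) * s ≤ 1) :
    P.real {ω | sInf {r | ∃ i j, i < j ∧ j < n ∧ r = |ξ i ω - ξ j ω|} ≤ s} =
      1 - (1 - (n - 1) * s) ^ n := by
  have hevent : {ω | sInf {r | ∃ i j, i < j ∧ j < n ∧ r = |ξ i ω - ξ j ω|} ≤ s} =
      ((fun ω (i : Fin n) => ξ i ω) ⁻¹' separated s)ᶜ := by
    ext ω
    simp [← lt_sInf_abs_sub_iff hn (ξ · ω) s]
  rw [hevent, probReal_compl_eq_one_sub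
      (measurableSet_separated.preimage (measurable_pi_lambda _ fun i => hmeas i)),
    measureReal_def, measure_separated_of_iid hmeas hlaw hindep hs, ENNReal.toReal_pow,
    ENNReal.toReal_ofReal (by linarith)]

end IID

/-- Let `ξ_1, ξ_2, …` be i.i.d. uniform on `[0,1]` and let
`W_n = min_{1≤i≤n−1}(ξ_{(i+1)} − ξ_{(i)})` be the smallest spacing of the first
`n` observations (equivalently, the minimum pairwise distance
`min_{i<j≤n} |ξ_i − ξ_j|`). Then `n² W_n` converges in distribution to the
exponential distribution with density `e^{−x}` on `x ≥ 0`. -/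
theorem smallest_spacing_limit_law
    {Ω : Type} [MeasurableSpace Ω] (P : Measure Ω) [IsProbabilityMeasure P]
    (ξ : ℕ → Ω → ℝ)
    (hmeas : ∀ i, Measurable (ξ i))
    (hlaw : ∀ i, Measure.map (ξ i) P =
      MeasureTheory.volume.restrict (Set.Icc (0 : ℝ) 1))
    (hindep : iIndepFun ξ P) :
    ∀ x : ℝ,
      Tendsto (fun n : ℕ =>
          (P {ω | (n : ℝ) ^ 2 *
              sInf {r | ∃ i j, i < j ∧ j < n ∧ r = |ξ i ω - ξ j ω|} ≤ x}).toReal)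
        atTop
        (nhds (if 0 ≤ x then 1 - Real.exp (-x) else 0)) := by
  intro x
  split_ifs with hx
  · refine (tendsto_const_nhds.sub (tendsto_one_sub_mul_div_sq_pow x)).congr' ?_
    filter_upwards [eventually_ge_atTop 2, eventually_ge_atTop ⌈x⌉₊] with n hn hnx
    have hn2 : (0 : ℝ) < n ^ 2 := by positivity
    have hxn : x ≤ n := Nat.ceil_le.1 hnx
    have hs1 : ((n : ℝ) - 1) * (x / n ^ 2) ≤ 1 := by
      rw [mul_div_assoc', div_le_one hn2]
      nlinarith
    simp_rw [mul_comm ((n : ℝ) ^ 2), ← le_div_iff₀ hn2]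
    rw [← measureReal_def, measureReal_sInf_abs_sub_le hmeas hlaw hindep hn (by positivity) hs1]
  · have hempty : ∀ n : ℕ, {ω | (n : ℝ) ^ 2 *
        sInf {r | ∃ i j, i < j ∧ j < n ∧ r = |ξ i ω - ξ j ω|} ≤ x} = ∅ := fun n =>
      eq_empty_of_forall_notMem fun ω hω =>
        hx ((mul_nonneg (by positivity) (sInf_abs_sub_nonneg n (ξ · ω))).trans hω)
    simp [hempty]
end
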